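/- arXiv:1206.0518 — 2 statements merged into one kernel-verified Lean document; each statement's English description precedes it below -/
import Mathlib

section
/- Let 𝕋 = ℝ/ℤ be the unit circle with the metric d(e^{2πix}, e^{2πiy}) = inf_{k∈ℤ} |x − y − k|, and for an integer m ≥ 2 let T_m : 𝕋 → 𝕋 be T_m(z) = z^m. Then for every subset C ⊆ 𝕋, the Hausdorff dimension of C equals h^B(T_m, C)/log m. -/
/-!
`T_m` is `m`-Lipschitz and multiplies distances exactly by `m` below the scale `1 / (2m)`.
Hence for a finite open cover `U`, a set `E` with `n = n_{T,U}(E)` has diameter comparable to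
`m⁻ⁿ`: at most `r m^{1-n}` when the members of `U` have diameter at most `r` (pull the cover
back `n - 1` times), and at least `δ m⁻ⁿ` when `δ` is a Lebesgue number of `U` (otherwise
`Tⁿ E` would fit into a member of `U`). So the weights `exp (-λ n_{T,U}(E))` and
`diam(E) ^ (λ / log m)` agree up to constant factors, and `m_{T,U}(C, λ) = 0` holds exactly
when `μH[λ / log m] C = 0`: in one direction for every `U`, in the other for fine `U`.
Taking infima over `λ` gives `h^B(T_m, C) = dim_H C · log m`.
-/

open Set Filter MeasureTheory
open scoped Classical ENNReal

noncomputable section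

namespace Lowering

variable {X : Type*} [TopologicalSpace X]

/-- A finite open cover of the whole space. -/
def IsFinOpenCover (U : Finset (Set X)) : Prop :=
  (∀ u ∈ U, IsOpen u) ∧ ⋃₀ (U : Set (Set X)) = Set.univ

/-- The dynamical refinement `⋁_{i=0}^{n-1} T⁻ⁱ U` of a family of subsets. -/
def dynRefine (T : X → X) (U : Set (Set X)) (n : ℕ) : Set (Set X) :=
  {V | ∃ f : ℕ → Set X, (∀ i < n, f i ∈ U) ∧ V = ⋂ i ∈ Finset.range n, T^[i] ⁻¹' f i}

/-- `N(V, K)`: the minimal cardinality of a finite subfamily of `V` covering `K`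
(with the convention `N(V, ∅) = 1`). -/
def coverNum (V : Set (Set X)) (K : Set X) : ℕ :=
  if K = ∅ then 1
  else sInf {n : ℕ | ∃ F : Finset (Set X), ↑F ⊆ V ∧ K ⊆ ⋃₀ (F : Set (Set X)) ∧ F.card = n}

/-- `h_U(T, K) = limsup_n (1/n) log N(⋁_{i=0}^{n-1} T⁻ⁱU, K)`. -/
def coverEntropyOf (T : X → X) (U : Finset (Set X)) (K : Set X) : EReal :=
  Filter.atTop.limsup fun n : ℕ =>
    ((Real.log (coverNum (dynRefine T (↑U) n) K) / n : ℝ) : EReal)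

/-- The covering entropy `h(T, K)` of a subset `K`. -/
def coverEntropy (T : X → X) (K : Set X) : EReal :=
  ⨆ (U : Finset (Set X)) (_ : IsFinOpenCover U), coverEntropyOf T U K

/-- `n_{T,U}(E)`: the largest `j` (possibly `∞`) such that `Tⁱ E` is contained in some member
of `U` for all `0 ≤ i ≤ j - 1`. -/
def bowenN (T : X → X) (U : Finset (Set X)) (E : Set X) : ℕ∞ :=
  ⨆ j ∈ {j : ℕ | ∀ i < j, ∃ u ∈ U, T^[i] '' E ⊆ u}, (j : ℕ∞)

/-- The weight `exp (-λ n)`, with the conventions `0 ⬝ ∞ = 0`. -/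
def expWeight (lam : ℝ) (n : ℕ∞) : ℝ≥0∞ :=
  if h : n = ⊤ then (if 0 < lam then 0 else if lam < 0 then ⊤ else 1)
  else ENNReal.ofReal (Real.exp (-lam * (n.untop h : ℕ)))

/-- `m_{T,U}(K, λ, k)` (with the paper's conventions for `K = ∅`). -/
def mPre (T : X → X) (U : Finset (Set X)) (K : Set X) (lam : ℝ) (k : ℕ) : ℝ≥0∞ :=
  if K = ∅ then (if lam < 0 then ⊤ else if lam = 0 then 1 else 0)
  else ⨅ (𝓔 : Set (Set X)) (_ : 𝓔.Countable) (_ : K ⊆ ⋃₀ 𝓔)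
        (_ : ∀ E ∈ 𝓔, ∃ V ∈ dynRefine T (↑U) k, E ⊆ V),
      ∑' E : 𝓔, expWeight lam (bowenN T U (E : Set X))

/-- `m_{T,U}(K, λ) = lim_{k → ∞} m_{T,U}(K, λ, k)`, the limit of the nondecreasing
sequence `k ↦ m_{T,U}(K, λ, k)`, i.e. its supremum. -/
def mBowen (T : X → X) (U : Finset (Set X)) (K : Set X) (lam : ℝ) : ℝ≥0∞ :=
  ⨆ k : ℕ, mPre T U K lam k

/-- `h^B_U(T,K) = inf {λ : m_{T,U}(K,λ) = 0}`. -/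
def bowenEntropyOf (T : X → X) (U : Finset (Set X)) (K : Set X) : EReal :=
  ⨅ (lam : ℝ) (_ : mBowen T U K lam = 0), (lam : EReal)

/-- The dimensional (Bowen) entropy `h^B(T, K)` of a subset `K`. -/
def bowenEntropy (T : X → X) (K : Set X) : EReal :=
  ⨆ (U : Finset (Set X)) (_ : IsFinOpenCover U), bowenEntropyOf T U K

/-- Souslin sets: sets of the form `⋃_{(i₁,i₂,…) ∈ ℕ^ℕ} ⋂_k E_{i₁,…,i_k}` with all the
`E_{i₁,…,i_k}` closed. -/
def IsSouslin (K : Set X) : Prop :=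
  ∃ E : List ℕ → Set X, (∀ l, IsClosed (E l)) ∧
    K = ⋃ σ : ℕ → ℕ, ⋂ k : ℕ, E (List.ofFn fun i : Fin (k + 1) => σ i)

def Lowerable (T : X → X) : Prop :=
  ∀ h : ℝ, 0 ≤ h → (h : EReal) ≤ coverEntropy T Set.univ →
    ∃ K : Set X, IsClosed K ∧ coverEntropy T K = (h : EReal)

def HereditarilyLowerable (T : X → X) : Prop :=
  ∀ K : Set X, IsClosed K → ∀ h : ℝ, 0 ≤ h → (h : EReal) ≤ coverEntropy T K →
    ∃ K' ⊆ K, IsClosed K' ∧ coverEntropy T K' = (h : EReal)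

def DLowerable (T : X → X) : Prop :=
  ∀ h : ℝ, 0 ≤ h → (h : EReal) ≤ coverEntropy T Set.univ →
    ∃ K : Set X, bowenEntropy T K = (h : EReal)

def DHereditarilyLowerable (T : X → X) : Prop :=
  ∀ K : Set X, IsSouslin K → ∀ h : ℝ, 0 ≤ h → (h : EReal) ≤ bowenEntropy T K →
    ∃ K' ⊆ K, bowenEntropy T K' = (h : EReal)

/-- `Φ_ε(x) = {y : d(Tⁿx, Tⁿy) ≤ ε for all n ≥ 0}`. -/
def phiSet {Y : Type*} [PseudoMetricSpace Y] (T : Y → Y) (ε : ℝ) (x : Y) : Set Y :=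
  {y | ∀ n : ℕ, dist (T^[n] x) (T^[n] y) ≤ ε}

/-- Asymptotic h-expansiveness: `lim_{ε → 0+} sup_x h(T, Φ_ε(x)) = 0`. -/
def AsympHExpansive {Y : Type*} [MetricSpace Y] (T : Y → Y) : Prop :=
  Filter.Tendsto (fun ε : ℝ => ⨆ x : Y, coverEntropy T (phiSet T ε x))
    (nhdsWithin 0 (Set.Ioi 0)) (nhds (0 : EReal))

/-- `N((U₁)₀ⁿ⁻¹ | (U₂)₀ⁿ⁻¹) = max_{V ∈ (U₂)₀ⁿ⁻¹} N((U₁)₀ⁿ⁻¹, V)`. -/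
def relCoverNum (T : X → X) (U1 U2 : Finset (Set X)) (n : ℕ) : ℕ :=
  sSup {k : ℕ | ∃ V ∈ dynRefine T (↑U2) n, k = coverNum (dynRefine T (↑U1) n) V}

/-- The topologically conditional entropy `h^*(T, X)`. -/
def condTopEntropy (T : X → X) : EReal :=
  ⨅ (U2 : Finset (Set X)) (_ : IsFinOpenCover U2),
    ⨆ (U1 : Finset (Set X)) (_ : IsFinOpenCover U1),
      ((⨅ n : ℕ, Real.log (relCoverNum T U1 U2 (n + 1)) / (n + 1) : ℝ) : EReal)

open Metric
open scoped NNReal Topology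

section BowenNumber

variable {α : Type*} {T : α → α} {U : Finset (Set α)} {E : Set α}

theorem natCast_le_bowenN_iff {n : ℕ} :
    (n : ℕ∞) ≤ bowenN T U E ↔ ∀ i < n, ∃ u ∈ U, T^[i] '' E ⊆ u := by
  refine ⟨fun h i hi => by_contra fun hi' => ?_, fun h => le_iSup₂_of_le n h le_rfl⟩
  have hle : bowenN T U E ≤ i := iSup₂_le fun j hj => by
    by_contra hji
    exact hi' (hj i (by exact_mod_cast not_le.1 hji))
  exact absurd (h.trans hle) (by exact_mod_cast hi.not_ge)

theorem not_exists_image_iterate_subset_of_bowenN_eq {n : ℕ} (h : bowenN T U E = n) :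
    ¬∃ u ∈ U, T^[n] '' E ⊆ u := fun hn => by
  have : ((n + 1 : ℕ) : ℕ∞) ≤ bowenN T U E := natCast_le_bowenN_iff.2 fun i hi =>
    (Nat.lt_succ_iff.1 hi).lt_or_eq.elim (natCast_le_bowenN_iff.1 h.ge i) (· ▸ hn)
  rw [h] at this
  exact absurd this (by exact_mod_cast n.not_succ_le_self)

theorem exists_mem_dynRefine_superset_iff {k : ℕ} :
    (∃ V ∈ dynRefine T U k, E ⊆ V) ↔ ∀ i < k, ∃ u ∈ U, T^[i] '' E ⊆ u := by
  constructor
  · rintro ⟨V, ⟨f, hf, rfl⟩, hEV⟩ i hi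
    exact ⟨f i, hf i hi, image_subset_iff.2
      (hEV.trans (biInter_subset_of_mem (Finset.mem_range.2 hi)))⟩
  · intro h
    choose f hfU hfE using h
    let g : ℕ → Set α := fun i => if hi : i < k then f i hi else univ
    refine ⟨_, ⟨g, fun i hi => by simpa [g, hi] using hfU i hi, rfl⟩, ?_⟩
    refine subset_iInter₂ fun i hi => ?_
    have hi : i < k := Finset.mem_range.1 hi
    simpa [g, hi, image_subset_iff] using hfE i hi

theorem natCast_le_bowenN_iff_exists_mem_dynRefine {k : ℕ} :
    (k : ℕ∞) ≤ bowenN T U E ↔ ∃ V ∈ dynRefine T U k, E ⊆ V :=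
  natCast_le_bowenN_iff.trans exists_mem_dynRefine_superset_iff.symm

end BowenNumber

section Weights

variable {lam : ℝ}

theorem expWeight_natCast (n : ℕ) :
    expWeight lam n = ENNReal.ofReal (Real.exp (-lam * n)) := by
  rw [expWeight, dif_neg (ENat.natCast_ne_top n)]
  rfl

theorem expWeight_top (h : 0 < lam) : expWeight lam ⊤ = 0 := by
  simp [expWeight, h]

theorem one_le_expWeight (h : lam ≤ 0) (n : ℕ∞) : 1 ≤ expWeight lam n := by
  cases n with
  | top => rcases h.lt_or_eq with h | rfl <;> simp [expWeight, h, lt_asymm]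
  | coe n =>
    rw [expWeight_natCast, ← ENNReal.ofReal_one, ← Real.exp_zero]
    exact ENNReal.ofReal_le_ofReal (Real.exp_le_exp.2 (by nlinarith [n.cast_nonneg (α := ℝ)]))

end Weights

section BowenMeasure

variable {α : Type*} {T : α → α} {U : Finset (Set α)} {C : Set α} {lam : ℝ} {k : ℕ}

theorem mPre_le_mBowen (k : ℕ) : mPre T U C lam k ≤ mBowen T U C lam :=
  le_iSup (mPre T U C lam) k

theorem mPre_le_tsum (hC : C.Nonempty) {𝓔 : Set (Set α)} (h𝓔 : 𝓔.Countable) (hcov : C ⊆ ⋃₀ 𝓔)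
    (href : ∀ E ∈ 𝓔, ∃ V ∈ dynRefine T U k, E ⊆ V) :
    mPre T U C lam k ≤ ∑' E : 𝓔, expWeight lam (bowenN T U E) := by
  rw [mPre, if_neg hC.ne_empty]
  exact iInf₂_le_of_le 𝓔 h𝓔 (iInf₂_le hcov href)

theorem exists_cover_of_mPre_lt (hC : C.Nonempty) {ε : ℝ≥0∞} (h : mPre T U C lam k < ε) :
    ∃ 𝓔 : Set (Set α), 𝓔.Countable ∧ C ⊆ ⋃₀ 𝓔 ∧ (∀ E ∈ 𝓔, ∃ V ∈ dynRefine T U k, E ⊆ V) ∧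
      ∑' E : 𝓔, expWeight lam (bowenN T U E) < ε := by
  simpa only [mPre, if_neg hC.ne_empty, iInf_lt_iff, exists_prop] using h

theorem pos_of_mBowen_eq_zero (h : mBowen T U C lam = 0) : 0 < lam := by
  by_contra! hlam
  have h0 : mPre T U C lam 0 < 1 := (mPre_le_mBowen 0).trans_lt (h ▸ zero_lt_one)
  rcases C.eq_empty_or_nonempty with rfl | hC
  · rcases hlam.lt_or_eq with hlam | rfl <;> simp [mPre, hlam] at h0
  · obtain ⟨x, hx⟩ := hC
    obtain ⟨𝓔, -, hcov, -, hsum⟩ := exists_cover_of_mPre_lt ⟨x, hx⟩ h0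
    obtain ⟨E, hE, -⟩ := hcov hx
    exact (one_le_expWeight hlam _).trans (ENNReal.le_tsum (⟨E, hE⟩ : 𝓔)) |>.not_gt hsum

theorem bowenEntropy_eq_biInf [TopologicalSpace α] {S : Set ℝ} {U₀ : Finset (Set α)}
    (hU₀ : IsFinOpenCover U₀)
    (h₀ : ∀ lam, mBowen T U₀ C lam = 0 → lam ∈ S)
    (hS : ∀ U, IsFinOpenCover U → ∀ lam ∈ S, mBowen T U C lam = 0) :
    bowenEntropy T C = ⨅ lam ∈ S, (lam : EReal) :=
  le_antisymm
    (iSup₂_le fun U hU => iInf₂_mono' fun lam hlam => ⟨lam, hS U hU lam hlam, le_rfl⟩)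
    (le_iSup₂_of_le U₀ hU₀ (le_iInf₂ fun lam hlam => iInf₂_le lam (h₀ lam hlam)))

end BowenMeasure

theorem _root_.EReal.biInf_coe_eq {S : Set ℝ} {a : ℝ} (h₁ : S ⊆ Ici a) (h₂ : Ioi a ⊆ S) :
    ⨅ x ∈ S, (x : EReal) = a :=
  le_antisymm
    (EReal.le_of_forall_lt_iff_le.1 fun _ hz => iInf₂_le_of_le _ (h₂ (by exact_mod_cast hz)) le_rfl)
    (le_iInf₂ fun _ hx => EReal.coe_le_coe_iff.2 (h₁ hx))

section Hausdorff

variable {α : Type*} [EMetricSpace α] [MeasurableSpace α] [BorelSpace α]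

theorem biInf_hausdorffMeasure_div_eq_zero (C : Set α) {c : ℝ} (hc : 0 < c) :
    ⨅ lam ∈ {lam : ℝ | 0 < lam ∧ μH[lam / c] C = 0}, (lam : EReal) = dimH C * c := by
  have hdimH_le {lam : ℝ} (hlam : lam ∈ {lam : ℝ | 0 < lam ∧ μH[lam / c] C = 0}) :
      dimH C ≤ ENNReal.ofReal (lam / c) :=
    dimH_le_of_hausdorffMeasure_ne_top (by
      rw [Real.coe_toNNReal _ (div_pos hlam.1 hc).le, hlam.2]; exact ENNReal.zero_ne_top)
  rcases eq_top_or_lt_top (dimH C) with htop | hlt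
  · rw [htop, EReal.coe_ennreal_top, EReal.top_mul_of_pos (by exact_mod_cast hc)]
    refine iInf₂_eq_top.2 fun lam hlam => absurd (hdimH_le hlam) ?_
    simp [htop]
  · rw [← EReal.coe_ennreal_toReal hlt.ne, ← EReal.coe_mul]
    refine EReal.biInf_coe_eq (fun lam hlam => ?_) (fun lam hlam => ?_)
    · have := ENNReal.toReal_mono ENNReal.ofReal_ne_top (hdimH_le hlam)
      rwa [ENNReal.toReal_ofReal (div_pos hlam.1 hc).le, le_div_iff₀ hc] at this
    · have hpos : 0 < lam := (mul_nonneg ENNReal.toReal_nonneg hc.le).trans_lt hlam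
      have hlt' : dimH C < (lam / c).toNNReal := by
        rw [← ENNReal.ofReal, ENNReal.lt_ofReal_iff_toReal_lt hlt.ne, lt_div_iff₀ hc]
        exact hlam
      refine ⟨hpos, ?_⟩
      simpa [Real.coe_toNNReal _ (div_pos hpos hc).le] using hausdorffMeasure_of_dimH_lt hlt'

end Hausdorff

theorem exp_neg_mul_log_mul_eq_inv_pow_rpow {K : ℝ} (hK : 0 < K) (t : ℝ) (n : ℕ) :
    Real.exp (-(t * Real.log K) * n) = ((K ^ n)⁻¹) ^ t := by
  rw [Real.rpow_def_of_pos (by positivity), Real.log_inv, Real.log_pow]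
  ring_nf

section Lipschitz

variable {α : Type*} [MetricSpace α] {T : α → α} {K : ℝ≥0} {U : Finset (Set α)} {δ : ℝ}

theorem IsFinOpenCover.exists_forall_ball_subset [CompactSpace α] (hU : IsFinOpenCover U) :
    ∃ δ > 0, ∀ x, ∃ u ∈ U, ball x δ ⊆ u := by
  have hcov : univ ⊆ ⋃ u : (U : Set (Set α)), (u : Set α) := by
    rw [← sUnion_eq_iUnion, hU.2]
  obtain ⟨δ, hδ, h⟩ := lebesgue_number_lemma_of_metric isCompact_univ
    (fun u : (U : Set (Set α)) => hU.1 u u.2) hcov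
  exact ⟨δ, hδ, fun x => let ⟨u, hu⟩ := h x trivial; ⟨u, u.2, hu⟩⟩

theorem _root_.LipschitzWith.exists_mem_image_iterate_subset (hT : LipschitzWith K T)
    (hU : U.Nonempty) (hδ : ∀ x, ∃ u ∈ U, ball x δ ⊆ u) {A : Set α} {i : ℕ}
    (h : (K : ℝ≥0∞) ^ i * ediam A < ENNReal.ofReal δ) : ∃ u ∈ U, T^[i] '' A ⊆ u := by
  rcases A.eq_empty_or_nonempty with rfl | ⟨x₀, hx₀⟩
  · obtain ⟨u, hu⟩ := hU
    exact ⟨u, hu, by simp⟩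
  obtain ⟨u, hu, hball⟩ := hδ (T^[i] x₀)
  refine ⟨u, hu, image_subset_iff.2 fun y hy => hball ?_⟩
  rw [mem_ball, ← edist_lt_ofReal]
  calc edist (T^[i] y) (T^[i] x₀) ≤ (K : ℝ≥0∞) ^ i * edist y x₀ := by
        simpa using (hT.iterate i).edist_le_mul y x₀
    _ ≤ (K : ℝ≥0∞) ^ i * ediam A := by gcongr; exact edist_le_ediam_of_mem hy hx₀
    _ < ENNReal.ofReal δ := h

theorem _root_.LipschitzWith.expWeight_bowenN_mul_le (hK : 1 < K) (hT : LipschitzWith K T)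
    (hU : U.Nonempty) (hδ₀ : 0 < δ) (hδ : ∀ x, ∃ u ∈ U, ball x δ ⊆ u) {t : ℝ} (ht : 0 < t)
    (A : Set α) :
    expWeight (t * Real.log K) (bowenN T U A) * ENNReal.ofReal δ ^ t ≤
      ⨆ _ : A.Nonempty, ediam A ^ t := by
  have hK₀ : 0 < K := zero_lt_one.trans hK
  have hlogK : 0 < Real.log K := Real.log_pos (by exact_mod_cast hK)
  cases hN : bowenN T U A using ENat.recTopCoe with
  | top => simp [expWeight_top (mul_pos ht hlogK)]
  | coe n =>
    have hle : ENNReal.ofReal δ ≤ (K : ℝ≥0∞) ^ n * ediam A := not_lt.1 fun h =>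
      not_exists_image_iterate_subset_of_bowenN_eq hN (hT.exists_mem_image_iterate_subset hU hδ h)
    rcases A.eq_empty_or_nonempty with rfl | hA
    · simp only [ediam_empty, mul_zero, nonpos_iff_eq_zero, ENNReal.ofReal_eq_zero] at hle
      exact absurd hle hδ₀.not_ge
    have hKn : ((K : ℝ≥0∞) ^ n)⁻¹ = ENNReal.ofReal (((K : ℝ) ^ n)⁻¹) := by
      rw [ENNReal.ofReal_inv_of_pos (by positivity), ← NNReal.coe_pow, ENNReal.ofReal_coe_nnreal,
        ENNReal.coe_pow]
    rw [iSup_pos hA, expWeight_natCast, exp_neg_mul_log_mul_eq_inv_pow_rpow (NNReal.coe_pos.2 hK₀),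
      ← ENNReal.ofReal_rpow_of_nonneg (by positivity) ht.le, ← hKn,
      ← ENNReal.mul_rpow_of_nonneg _ _ ht.le]
    gcongr
    exact (ENNReal.inv_mul_le_iff (pow_ne_zero _ (ENNReal.coe_ne_zero.2 hK₀.ne')) (by simp)).2 hle

theorem _root_.LipschitzWith.mBowen_eq_zero_of_hausdorffMeasure_eq_zero [CompactSpace α]
    [MeasurableSpace α] [BorelSpace α] (hK : 1 < K) (hT : LipschitzWith K T)
    (hU : IsFinOpenCover U) {C : Set α} {lam : ℝ} (hlam : 0 < lam)
    (hC : μH[lam / Real.log K] C = 0) : mBowen T U C lam = 0 := by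
  have hK₀ : 0 < K := zero_lt_one.trans hK
  have hlogK : 0 < Real.log K := Real.log_pos (by exact_mod_cast hK)
  set t := lam / Real.log K
  have ht : 0 < t := div_pos hlam hlogK
  have hlam_eq : lam = t * Real.log K := (div_mul_cancel₀ _ hlogK.ne').symm
  refine ENNReal.iSup_eq_zero.2 fun k => ?_
  rcases C.eq_empty_or_nonempty with rfl | ⟨x, hx⟩
  · simp [mPre, hlam.ne', not_lt.2 hlam.le]
  have hUne : U.Nonempty := by
    obtain ⟨u, hu, -⟩ : x ∈ ⋃₀ (U : Set (Set α)) := hU.2 ▸ mem_univ x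
    exact ⟨u, hu⟩
  obtain ⟨δ, hδ₀, hδ⟩ := hU.exists_forall_ball_subset
  -- Below the scale `ρ`, the first `k` images of a set stay below the Lebesgue number `δ`.
  set ρ := ENNReal.ofReal (δ / K ^ k)
  have key (A : ℕ → Set α) (hAC : C ⊆ ⋃ n, A n) (hAρ : ∀ n, ediam (A n) ≤ ρ) :
      mPre T U C lam k * ENNReal.ofReal δ ^ t ≤ ∑' n, ⨆ _ : (A n).Nonempty, ediam (A n) ^ t := by
    have href : ∀ E ∈ range A, ∃ V ∈ dynRefine T U k, E ⊆ V := by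
      rintro _ ⟨n, rfl⟩
      refine exists_mem_dynRefine_superset_iff.2 fun i hi =>
        hT.exists_mem_image_iterate_subset hUne hδ ?_
      calc (K : ℝ≥0∞) ^ i * ediam (A n) ≤ (K : ℝ≥0∞) ^ i * ρ := by gcongr; exact hAρ n
        _ = ENNReal.ofReal ((K : ℝ) ^ i * (δ / K ^ k)) := by
          rw [ENNReal.ofReal_mul (by positivity), ← NNReal.coe_pow, ENNReal.ofReal_coe_nnreal,
            ENNReal.coe_pow]
        _ < ENNReal.ofReal δ := by
          rw [ENNReal.ofReal_lt_ofReal_iff hδ₀, mul_div_assoc', div_lt_iff₀ (by positivity),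
            mul_comm]
          gcongr
    calc mPre T U C lam k * ENNReal.ofReal δ ^ t
        ≤ (∑' E : range A, expWeight lam (bowenN T U E)) * ENNReal.ofReal δ ^ t := by
          gcongr
          exact mPre_le_tsum ⟨x, hx⟩ (countable_range A) (by rwa [sUnion_range]) href
      _ ≤ (∑' n, expWeight lam (bowenN T U (A n))) * ENNReal.ofReal δ ^ t := by
          gcongr
          exact ENNReal.tsum_le_tsum_comp_of_surjective rangeFactorization_surjective _
      _ = ∑' n, expWeight lam (bowenN T U (A n)) * ENNReal.ofReal δ ^ t :=
          ENNReal.tsum_mul_right.symm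
      _ ≤ ∑' n, ⨆ _ : (A n).Nonempty, ediam (A n) ^ t := ENNReal.tsum_le_tsum fun n =>
          hlam_eq ▸ hT.expWeight_bowenN_mul_le hK hUne hδ₀ hδ ht (A n)
  have hzero : mPre T U C lam k * ENNReal.ofReal δ ^ t = 0 := by
    refine le_antisymm (le_trans ?_ hC.le) zero_le
    rw [Measure.hausdorffMeasure_apply]
    exact le_iSup₂_of_le ρ (by simp only [ρ]; positivity) (le_iInf fun A => le_iInf₂ (key A))
  simpa [hδ₀.not_ge] using hzero

end Lipschitz

theorem tendsto_ofReal_div_pow {K : ℝ} (hK : 1 < K) (r : ℝ) :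
    Tendsto (fun n : ℕ => ENNReal.ofReal (r / K ^ n)) atTop (𝓝 0) := by
  simpa using ENNReal.tendsto_ofReal
    (tendsto_const_nhds.div_atTop (tendsto_pow_atTop_atTop_of_one_lt hK))

section Expanding

variable {α : Type*} [MetricSpace α] {T : α → α} {K : ℝ≥0} {r : ℝ} {U : Finset (Set α)}

theorem dist_le_div_pow_of_forall_dist_iterate_le (hK : 0 < K)
    (hexp : ∀ x y, dist x y ≤ r → K * dist x y ≤ dist (T x) (T y)) (n : ℕ) {x y : α}
    (h : ∀ i ≤ n, dist (T^[i] x) (T^[i] y) ≤ r) : dist x y ≤ r / K ^ n := by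
  induction n generalizing x y with
  | zero => simpa using h 0 le_rfl
  | succ n ih =>
    have h₀ : dist x y ≤ r := h 0 (n + 1).zero_le
    have h₁ : dist (T x) (T y) ≤ r / K ^ n := ih fun i hi => by
      simpa only [Function.iterate_succ_apply] using h (i + 1) (by omega)
    rw [pow_succ, ← div_div, le_div_iff₀ (by positivity), mul_comm]
    exact (hexp x y h₀).trans h₁

theorem ediam_le_of_succ_le_bowenN (hK : 0 < K)
    (hexp : ∀ x y, dist x y ≤ r → K * dist x y ≤ dist (T x) (T y))
    (hU : ∀ u ∈ U, ∀ x ∈ u, ∀ y ∈ u, dist x y ≤ r) {E : Set α} {n : ℕ}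
    (h : ((n + 1 : ℕ) : ℕ∞) ≤ bowenN T U E) : ediam E ≤ ENNReal.ofReal (r / K ^ n) := by
  refine ediam_le fun x hx y hy => ?_
  rw [edist_dist]
  refine ENNReal.ofReal_le_ofReal (dist_le_div_pow_of_forall_dist_iterate_le hK hexp n
    fun i hi => ?_)
  obtain ⟨u, hu, hEu⟩ := natCast_le_bowenN_iff.1 h i (Nat.lt_succ_of_le hi)
  exact hU u hu _ (hEu (mem_image_of_mem _ hx)) _ (hEu (mem_image_of_mem _ hy))

theorem ediam_rpow_le_mul_expWeight (hK : 1 < K)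
    (hexp : ∀ x y, dist x y ≤ r → K * dist x y ≤ dist (T x) (T y)) (hr : 0 ≤ r)
    (hU : ∀ u ∈ U, ∀ x ∈ u, ∀ y ∈ u, dist x y ≤ r) {t : ℝ} (ht : 0 < t) {E : Set α}
    (hE : 1 ≤ bowenN T U E) :
    ediam E ^ t ≤ ENNReal.ofReal ((r * K) ^ t) * expWeight (t * Real.log K) (bowenN T U E) := by
  have hK₀ : 0 < K := zero_lt_one.trans hK
  cases hN : bowenN T U E using ENat.recTopCoe with
  | top =>
    have hE₀ : ediam E = 0 := le_antisymm (ge_of_tendsto' (tendsto_ofReal_div_pow hK r)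
      fun n => ediam_le_of_succ_le_bowenN hK₀ hexp hU (hN ▸ le_top)) zero_le
    simp [hE₀, ht]
  | coe N =>
    obtain ⟨n, rfl⟩ : ∃ n, N = n + 1 :=
      Nat.exists_eq_add_of_le' (by exact_mod_cast hN ▸ hE : 1 ≤ N)
    have hdiam := ediam_le_of_succ_le_bowenN hK₀ hexp hU hN.ge
    rw [expWeight_natCast, exp_neg_mul_log_mul_eq_inv_pow_rpow (NNReal.coe_pos.2 hK₀),
      ← ENNReal.ofReal_mul (by positivity), ← Real.mul_rpow (by positivity) (by positivity)]
    calc ediam E ^ t ≤ ENNReal.ofReal (r / K ^ n) ^ t := by gcongr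
      _ = ENNReal.ofReal ((r * K * ((K : ℝ) ^ (n + 1))⁻¹) ^ t) := by
        rw [ENNReal.ofReal_rpow_of_nonneg (by positivity) ht.le]
        congr 2
        field_simp
        ring

theorem hausdorffMeasure_eq_zero_of_mBowen_eq_zero [MeasurableSpace α] [BorelSpace α]
    (hK : 1 < K) (hexp : ∀ x y, dist x y ≤ r → K * dist x y ≤ dist (T x) (T y)) (hr : 0 ≤ r)
    (hU : ∀ u ∈ U, ∀ x ∈ u, ∀ y ∈ u, dist x y ≤ r) {C : Set α} {lam : ℝ}
    (h : mBowen T U C lam = 0) : μH[lam / Real.log K] C = 0 := by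
  have hK₀ : 0 < K := zero_lt_one.trans hK
  have hlogK : 0 < Real.log K := Real.log_pos (by exact_mod_cast hK)
  set t := lam / Real.log K
  have ht : 0 < t := div_pos (pos_of_mBowen_eq_zero h) hlogK
  have hlam_eq : lam = t * Real.log K := (div_mul_cancel₀ _ hlogK.ne').symm
  rcases C.eq_empty_or_nonempty with rfl | hC
  · exact measure_empty
  -- Level `k + 1` puts every member of the cover inside a member of `U`, so `1 ≤ bowenN`.
  have hcover (k : ℕ) := exists_cover_of_mPre_lt (k := k + 1) hC
    ((mPre_le_mBowen _).trans_lt (h ▸ ENNReal.inv_pos.2 (ENNReal.natCast_ne_top k)))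
  choose 𝓔 h𝓔 hcov href hsum using hcover
  have (k : ℕ) : Countable (𝓔 k) := (h𝓔 k).to_subtype
  have hle (k : ℕ) (E : 𝓔 k) : ((k + 1 : ℕ) : ℕ∞) ≤ bowenN T U E :=
    natCast_le_bowenN_iff_exists_mem_dynRefine.2 (href k E E.2)
  set c := ENNReal.ofReal ((r * K) ^ t)
  have hsum_le (k : ℕ) : ∑' E : 𝓔 k, ediam (E : Set α) ^ t ≤ c * (k : ℝ≥0∞)⁻¹ :=
    calc ∑' E : 𝓔 k, ediam (E : Set α) ^ t
        ≤ ∑' E : 𝓔 k, c * expWeight lam (bowenN T U E) := ENNReal.tsum_le_tsum fun E =>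
          hlam_eq ▸ ediam_rpow_le_mul_expWeight hK hexp hr hU ht
            ((Nat.cast_le.2 k.succ_pos).trans (hle k E))
      _ = c * ∑' E : 𝓔 k, expWeight lam (bowenN T U E) := ENNReal.tsum_mul_left
      _ ≤ c * (k : ℝ≥0∞)⁻¹ := by gcongr; exact (hsum k).le
  have hlim : Tendsto (fun k : ℕ => c * (k : ℝ≥0∞)⁻¹) atTop (𝓝 0) := by
    simpa using ENNReal.Tendsto.const_mul ENNReal.tendsto_inv_nat_nhds_zero
      (Or.inr ENNReal.ofReal_ne_top)
  refine le_antisymm ?_ zero_le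
  calc μH[t] C ≤ liminf (fun k => ∑' E : 𝓔 k, ediam (E : Set α) ^ t) atTop :=
        Measure.hausdorffMeasure_le_liminf_tsum t C _ (tendsto_ofReal_div_pow hK r)
          (fun k (E : 𝓔 k) => (E : Set α))
          (Eventually.of_forall fun k E => ediam_le_of_succ_le_bowenN hK₀ hexp hU (hle k E))
          (Eventually.of_forall fun k => by rw [← sUnion_eq_iUnion]; exact hcov k)
    _ ≤ liminf (fun k : ℕ => c * (k : ℝ≥0∞)⁻¹) atTop := liminf_le_liminf (.of_forall hsum_le)
    _ = 0 := hlim.liminf_eq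

end Expanding

theorem exists_isFinOpenCover_forall_dist_le {α : Type*} [MetricSpace α] [CompactSpace α] {r : ℝ}
    (hr : 0 < r) :
    ∃ U : Finset (Set α), IsFinOpenCover U ∧ ∀ u ∈ U, ∀ x ∈ u, ∀ y ∈ u, dist x y ≤ r := by
  obtain ⟨s, hs⟩ := isCompact_univ.elim_finite_subcover (fun x : α => ball x (r / 2))
    (fun _ => isOpen_ball) (fun x _ => mem_iUnion.2 ⟨x, mem_ball_self (half_pos hr)⟩)
  refine ⟨s.image (ball · (r / 2)), ⟨?_, ?_⟩, ?_⟩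
  · simp only [Finset.mem_image]
    rintro _ ⟨c, -, rfl⟩
    exact isOpen_ball
  · refine eq_univ_of_univ_subset fun x hx => ?_
    obtain ⟨c, hc, hxc⟩ := mem_iUnion₂.1 (hs hx)
    exact ⟨ball c (r / 2), Finset.mem_coe.2 (Finset.mem_image_of_mem _ hc), hxc⟩
  · simp only [Finset.mem_image]
    rintro _ ⟨c, -, rfl⟩ x hx y hy
    linarith [dist_triangle_right x y c, mem_ball.1 hx, mem_ball.1 hy]

theorem bowenEntropy_eq_dimH_mul_log {α : Type*} [MetricSpace α] [CompactSpace α]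
    [MeasurableSpace α] [BorelSpace α] {T : α → α} {K : ℝ≥0} (hK : 1 < K)
    (hT : LipschitzWith K T) {r : ℝ} (hr : 0 < r)
    (hexp : ∀ x y, dist x y ≤ r → K * dist x y ≤ dist (T x) (T y)) (C : Set α) :
    bowenEntropy T C = dimH C * Real.log K := by
  obtain ⟨U₀, hU₀, hU₀r⟩ := exists_isFinOpenCover_forall_dist_le (α := α) hr
  rw [bowenEntropy_eq_biInf (S := {lam | 0 < lam ∧ μH[lam / Real.log K] C = 0}) hU₀
    (fun _ h => ⟨pos_of_mBowen_eq_zero h,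
      hausdorffMeasure_eq_zero_of_mBowen_eq_zero hK hexp hr.le hU₀r h⟩)
    (fun _ hU _ hlam => hT.mBowen_eq_zero_of_hausdorffMeasure_eq_zero hK hU hlam.1 hlam.2)]
  exact biInf_hausdorffMeasure_div_eq_zero C (Real.log_pos (by exact_mod_cast hK))

theorem _root_.lipschitzWith_nsmul {E : Type*} [SeminormedAddCommGroup E] (m : ℕ) :
    LipschitzWith m (fun z : E => m • z) :=
  LipschitzWith.of_dist_le_mul fun x y => by
    simpa [dist_eq_norm, ← smul_sub] using norm_nsmul_le (n := m) (a := x - y)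

theorem _root_.AddCircle.norm_nsmul_eq_mul_norm {p : ℝ} (hp : p ≠ 0) (m : ℕ) {z : AddCircle p}
    (hz : m * ‖z‖ ≤ |p| / 2) : ‖m • z‖ = m * ‖z‖ := by
  obtain ⟨x, rfl⟩ := QuotientAddGroup.mk_surjective z
  set w := x - round (p⁻¹ * x) * p
  have hw : (w : AddCircle p) = x := by
    rw [AddCircle.coe_sub, sub_eq_self, AddCircle.coe_eq_zero_iff]
    exact ⟨round (p⁻¹ * x), zsmul_eq_mul _ _⟩
  have hnorm : ‖(w : AddCircle p)‖ = |w| := hw ▸ AddCircle.norm_eq p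
  rw [← hw, hnorm] at hz ⊢
  rw [← AddCircle.coe_nsmul, nsmul_eq_mul, (AddCircle.norm_coe_eq_abs_iff p hp).2, abs_mul,
    Nat.abs_cast]
  rwa [abs_mul, Nat.abs_cast]

/-- On the circle `𝕋 = ℝ/ℤ` with the quotient metric, for `T_m : z ↦ z^m` (`m ≥ 2`) the
Hausdorff dimension of any subset `C` equals `h^B(T_m, C) / log m`. -/
theorem dimH_mul_log_eq_bowenEntropy (m : ℕ) (hm : 2 ≤ m) (C : Set (AddCircle (1 : ℝ))) :
    (dimH C : EReal) * ((Real.log m : ℝ) : EReal) =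
      bowenEntropy (fun z : AddCircle (1 : ℝ) => m • z) C := by
  have hm₀ : (0 : ℝ) < m := by positivity
  have hexp (x y : AddCircle (1 : ℝ)) (h : dist x y ≤ 1 / (2 * m)) :
      (m : ℝ≥0) * dist x y ≤ dist (m • x) (m • y) := by
    rw [dist_eq_norm, dist_eq_norm, ← smul_sub, AddCircle.norm_nsmul_eq_mul_norm one_ne_zero]
    · simp
    · rw [dist_eq_norm, le_div_iff₀ (by positivity)] at h
      rw [abs_one]
      linarith
  simpa using (bowenEntropy_eq_dimH_mul_log (K := m) (by exact_mod_cast hm)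
    (lipschitzWith_nsmul m) (by positivity) hexp C).symm

end Lowering
end
end

section
/- Let (X_i, T_i), i ∈ ℕ, be topological dynamical systems and let (Y,S) = ∏_{i∈ℕ} (X_i, T_i) be the product system with π_i : Y → X_i the i-th projection. Then for each closed subset K ⊆ Y and each j ∈ ℕ, h(T_j, π_j K) ≤ h(S, K) ≤ Σ_{i∈ℕ} h(T_i, π_i K). -/
open Set Filter MeasureTheory
open scoped Classical ENNReal

noncomputable section

namespace Lowering

variable {X : Type*} [TopologicalSpace X]

/-!
The lower bound holds for any factor map: the projection `π_j` semiconjugates `S` to `T_j`, so the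
pull-back along `π_j` of a cover `U` of `X_j` has as dynamical refinements the pull-backs of those
of `U`, and covering numbers can only drop under `π_j`.

For the upper bound, compactness of `Y` lets us refine a finite open cover `U` of `Y` by boxes:
there are a finite set `s` of coordinates and finite open covers `V_i` of the `X_i` such that every
box `∏_{i ∈ s} v_i` with `v_i ∈ V_i` lies in a member of `U` (take for `V_i` the atoms of the
`i`-th sides of finitely many basic open boxes covering `Y`). Dynamical refinements of boxes are
boxes of dynamical refinements, so `N(⋁_{k<n} S⁻ᵏU, K) ≤ ∏_{i ∈ s} N(⋁_{k<n} T_i⁻ᵏV_i, π_i K)`,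
and after taking logarithms the `limsup` of a sum is at most the sum of the `limsup`s.
-/

section CoverNum

variable {α : Type*}

lemma coverNum_empty (V : Set (Set α)) : coverNum V ∅ = 1 := if_pos rfl

lemma coverNum_le_card {V : Set (Set α)} {K : Set α} (hK : K.Nonempty) {F : Finset (Set α)}
    (hFV : ↑F ⊆ V) (hKF : K ⊆ ⋃₀ ↑F) : coverNum V K ≤ F.card := by
  rw [coverNum, if_neg hK.ne_empty]
  exact Nat.sInf_le ⟨F, hFV, hKF, rfl⟩

/-- Without a finite subfamily of `V` covering `K`, `coverNum V K` is the junk value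
`sInf ∅ = 0`; this is why the lemmas below assume such a subfamily exists. -/
lemma exists_card_eq_coverNum {V : Set (Set α)} {K : Set α} (hK : K.Nonempty)
    (hV : ∃ F : Finset (Set α), ↑F ⊆ V ∧ K ⊆ ⋃₀ ↑F) :
    ∃ F : Finset (Set α), ↑F ⊆ V ∧ K ⊆ ⋃₀ ↑F ∧ F.card = coverNum V K := by
  rw [coverNum, if_neg hK.ne_empty]
  obtain ⟨F, hFV, hKF⟩ := hV
  exact Nat.sInf_mem (s := {n | ∃ F : Finset (Set α), ↑F ⊆ V ∧ K ⊆ ⋃₀ ↑F ∧ F.card = n})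
    ⟨_, F, hFV, hKF, rfl⟩

lemma coverNum_pos {V : Set (Set α)} {K : Set α}
    (hV : ∃ F : Finset (Set α), ↑F ⊆ V ∧ K ⊆ ⋃₀ ↑F) : 0 < coverNum V K := by
  rcases K.eq_empty_or_nonempty with rfl | hK
  · simp [coverNum_empty]
  obtain ⟨F, -, hKF, hF⟩ := exists_card_eq_coverNum hK hV
  obtain ⟨x, hx⟩ := hK
  obtain ⟨W, hW, -⟩ := hKF hx
  exact hF ▸ Finset.card_pos.2 ⟨W, hW⟩

lemma coverNum_image_le_card {β : Type*} (π : α → β) {V : Set (Set β)} {K : Set α}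
    (hK : K.Nonempty) {F : Finset (Set α)} (hFV : ∀ w ∈ F, ∃ v ∈ V, w ⊆ π ⁻¹' v)
    (hKF : K ⊆ ⋃₀ ↑F) : coverNum V (π '' K) ≤ F.card := by
  choose! g hgV hg using hFV
  refine (coverNum_le_card (hK.image π) (F := F.image g) ?_ ?_).trans Finset.card_image_le
  · rw [Finset.coe_image]
    rintro _ ⟨w, hw, rfl⟩
    exact hgV w hw
  · rintro _ ⟨x, hx, rfl⟩
    obtain ⟨w, hw, hxw⟩ := hKF hx
    exact ⟨g w, Finset.mem_image_of_mem g hw, hg w hw hxw⟩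

lemma coverNum_image_le {β : Type*} (π : α → β) {V : Set (Set β)} {W : Set (Set α)} {K : Set α}
    (hWV : ∀ w ∈ W, ∃ v ∈ V, w ⊆ π ⁻¹' v) (hW : ∃ F : Finset (Set α), ↑F ⊆ W ∧ K ⊆ ⋃₀ ↑F) :
    coverNum V (π '' K) ≤ coverNum W K := by
  rcases K.eq_empty_or_nonempty with rfl | hK
  · simp [coverNum_empty]
  obtain ⟨F, hFW, hKF, hF⟩ := exists_card_eq_coverNum hK hW
  exact hF ▸ coverNum_image_le_card π hK (fun w hw => hWV w (hFW hw)) hKF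

end CoverNum

section DynRefine

variable {α : Type*}

lemma iInter_preimage_mem_dynRefine (T : α → α) {U : Set (Set α)} {n : ℕ}
    (g : ∀ t < n, Set α) (hg : ∀ t ht, g t ht ∈ U) :
    (⋂ (t) (ht : t < n), T^[t] ⁻¹' g t ht) ∈ dynRefine T U n := by
  refine ⟨fun t => if ht : t < n then g t ht else ∅, fun t ht => by simpa [ht] using hg t ht, ?_⟩
  ext x
  simp +contextual

lemma exists_finset_subset_dynRefine_cover (T : α → α) {U : Finset (Set α)}
    (hU : ⋃₀ (U : Set (Set α)) = univ) (n : ℕ) (K : Set α) :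
    ∃ F : Finset (Set α), ↑F ⊆ dynRefine T ↑U n ∧ K ⊆ ⋃₀ ↑F := by
  let cylinder (c : ∀ t ∈ Finset.range n, Set α) : Set α :=
    ⋂ (t) (ht : t < n), T^[t] ⁻¹' c t (Finset.mem_range.2 ht)
  refine ⟨((Finset.range n).pi fun _ => U).image cylinder, ?_, fun x _ => ?_⟩
  · rw [Finset.coe_image]
    rintro _ ⟨c, hc, rfl⟩
    exact iInter_preimage_mem_dynRefine T _ fun t ht => Finset.mem_pi.1 hc t _
  · have hcov (t : ℕ) : ∃ u ∈ U, T^[t] x ∈ u := by simpa using hU.ge (mem_univ (T^[t] x))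
    choose u hu hxu using hcov
    refine ⟨cylinder fun t _ => u t,
      Finset.mem_image_of_mem _ (Finset.mem_pi.2 fun t _ => hu t), ?_⟩
    simp [cylinder, hxu]

end DynRefine

lemma log_natCast_le_log_natCast {m n : ℕ} (h : m ≤ n) : Real.log m ≤ Real.log n := by
  rcases m.eq_zero_or_pos with rfl | hm
  · simpa using Real.log_natCast_nonneg n
  · exact Real.log_le_log (by exact_mod_cast hm) (by exact_mod_cast h)

lemma limsup_coe_sum_le {α ι : Type*} {f : Filter α} [f.NeBot] (s : Finset ι) {u : ι → α → ℝ}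
    (hu : ∀ i ∈ s, ∀ a, 0 ≤ u i a) :
    limsup (fun a => ((∑ i ∈ s, u i a : ℝ) : EReal)) f ≤
      ∑ i ∈ s, limsup (fun a => (u i a : EReal)) f := by
  have limsup_ne_bot {v : α → ℝ} (hv : ∀ a, 0 ≤ v a) : limsup (fun a => (v a : EReal)) f ≠ ⊥ :=
    ne_bot_of_le_ne_bot EReal.zero_ne_bot
      (le_limsup_of_frequently_le' (.of_forall fun a => EReal.coe_nonneg.2 (hv a)))
  induction s using Finset.cons_induction with
  | empty => simp
  | cons i s hi ih =>
    have hs : ∀ j ∈ s, ∀ a, 0 ≤ u j a := fun j hj => hu j (Finset.mem_cons_of_mem hj)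
    simp only [Finset.sum_cons, EReal.coe_add]
    refine (EReal.limsup_add_le (Or.inl (limsup_ne_bot (hu i (Finset.mem_cons_self i s))))
      (Or.inr (limsup_ne_bot fun a => Finset.sum_nonneg fun j hj => hs j hj a))).trans ?_
    gcongr
    exact ih hs

section CoverEntropy

variable {α β : Type*}

lemma coverEntropyOf_nonneg (T : α → α) (U : Finset (Set α)) (K : Set α) :
    0 ≤ coverEntropyOf T U K :=
  le_limsup_of_frequently_le' (.of_forall fun n => EReal.coe_nonneg.2
    (div_nonneg (Real.log_natCast_nonneg _) n.cast_nonneg))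

lemma coverEntropyOf_empty (T : α → α) (U : Finset (Set α)) : coverEntropyOf T U ∅ = 0 := by
  simp [coverEntropyOf, coverNum_empty]

lemma coverEntropyOf_mono {T : α → α} {S : β → β} {U : Finset (Set α)} {V : Finset (Set β)}
    {K : Set α} {L : Set β}
    (h : ∀ n, coverNum (dynRefine T ↑U n) K ≤ coverNum (dynRefine S ↑V n) L) :
    coverEntropyOf T U K ≤ coverEntropyOf S V L :=
  limsup_le_limsup (.of_forall fun n => EReal.coe_le_coe_iff.2
    (div_le_div_of_nonneg_right (log_natCast_le_log_natCast (h n)) n.cast_nonneg))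

lemma coverEntropyOf_le_sum {ι : Type*} {α : ι → Type*} {S : β → β} {U : Finset (Set β)}
    {L : Set β} {s : Finset ι} {T : ∀ i, α i → α i} {V : ∀ i, Finset (Set (α i))}
    {K : ∀ i, Set (α i)} (hpos : ∀ i ∈ s, ∀ n, 0 < coverNum (dynRefine (T i) ↑(V i) n) (K i))
    (h : ∀ n, coverNum (dynRefine S ↑U n) L ≤ ∏ i ∈ s, coverNum (dynRefine (T i) ↑(V i) n) (K i)) :
    coverEntropyOf S U L ≤ ∑ i ∈ s, coverEntropyOf (T i) (V i) (K i) := by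
  refine (limsup_le_limsup (.of_forall fun n => EReal.coe_le_coe_iff.2 ?_)).trans
    (limsup_coe_sum_le s fun i _ n => div_nonneg (Real.log_natCast_nonneg _) n.cast_nonneg)
  rw [← Finset.sum_div, ← Real.log_prod fun i hi => by exact_mod_cast (hpos i hi n).ne',
    ← Nat.cast_prod]
  exact div_le_div_of_nonneg_right (log_natCast_le_log_natCast (h n)) n.cast_nonneg

variable [TopologicalSpace α]

lemma coverEntropyOf_le_coverEntropy (T : α → α) {U : Finset (Set α)} (hU : IsFinOpenCover U)
    (K : Set α) : coverEntropyOf T U K ≤ coverEntropy T K :=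
  le_iSup₂ (f := fun U (_ : IsFinOpenCover U) => coverEntropyOf T U K) U hU

lemma coverEntropy_nonneg (T : α → α) (K : Set α) : 0 ≤ coverEntropy T K :=
  (coverEntropyOf_nonneg T {univ} K).trans (coverEntropyOf_le_coverEntropy T ⟨by simp, by simp⟩ K)

end CoverEntropy

section Factor

variable {α β : Type*} {S : β → β} {T : α → α} {π : β → α}

lemma exists_dynRefine_subset_preimage (h : Function.Semiconj π S T) {U : Finset (Set α)} {n : ℕ}
    {W : Set β} (hW : W ∈ dynRefine S ↑(U.image (π ⁻¹' ·)) n) :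
    ∃ V ∈ dynRefine T ↑U n, W ⊆ π ⁻¹' V := by
  obtain ⟨f, hf, rfl⟩ := hW
  have hfU (t : ℕ) (ht : t < n) : ∃ g ∈ U, π ⁻¹' g = f t := by simpa using hf t ht
  choose g hgU hgf using hfU
  refine ⟨_, iInter_preimage_mem_dynRefine T g hgU, fun y hy => mem_iInter₂.2 fun t ht => ?_⟩
  have hyt : S^[t] y ∈ π ⁻¹' g t ht := hgf t ht ▸ mem_iInter₂.1 hy t (Finset.mem_range.2 ht)
  rwa [mem_preimage, (h.iterate_right t).eq] at hyt

theorem coverEntropy_image_le_of_semiconj [TopologicalSpace α] [TopologicalSpace β]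
    (hπ : Continuous π) (h : Function.Semiconj π S T) (K : Set β) :
    coverEntropy T (π '' K) ≤ coverEntropy S K := by
  refine iSup₂_le fun U hU => ?_
  have hπU : IsFinOpenCover (U.image (π ⁻¹' ·)) := by
    refine ⟨by simpa using fun u hu => (hU.1 u hu).preimage hπ, ?_⟩
    rw [Finset.coe_image, sUnion_image, ← preimage_iUnion₂, ← sUnion_eq_biUnion, hU.2,
      preimage_univ]
  refine (coverEntropyOf_mono fun n => coverNum_image_le π (fun W hW => ?_) ?_).trans
    (coverEntropyOf_le_coverEntropy S hπU K)
  · exact exists_dynRefine_subset_preimage h hW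
  · exact exists_finset_subset_dynRefine_cover S hπU.2 n K

end Factor

lemma exists_isFinOpenCover_forall_subset_of_mem {Z A : Type*} [TopologicalSpace Z] [Finite A]
    (O : A → Set Z) (hO : ∀ a, IsOpen (O a)) :
    ∃ V : Finset (Set Z), IsFinOpenCover V ∧ ∀ v ∈ V, ∃ z, ∀ a, z ∈ O a → v ⊆ O a := by
  unfold IsFinOpenCover
  let atom (z : Z) : Set Z := ⋂ a ∈ {a | z ∈ O a}, O a
  have hfin : (range atom).Finite :=
    (finite_range fun B : Set A => ⋂ a ∈ B, O a).subset
      (range_comp_subset_range (fun z => {a | z ∈ O a}) fun B : Set A => ⋂ a ∈ B, O a)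
  refine ⟨hfin.toFinset, ⟨?_, ?_⟩, ?_⟩
  · simp only [Finite.mem_toFinset, mem_range, forall_exists_index, forall_apply_eq_imp_iff]
    exact fun z => (toFinite _).isOpen_biInter fun a _ => hO a
  · exact eq_univ_of_forall fun z => ⟨atom z, by simp, mem_iInter₂.2 fun a ha => ha⟩
  · simp only [Finite.mem_toFinset, mem_range, forall_exists_index, forall_apply_eq_imp_iff]
    exact fun z => ⟨z, fun a ha => biInter_subset_of_mem ha⟩

section Product

variable {ι : Type*} {X : ι → Type*}

/-- The join `⋁_{i ∈ s} π_i⁻¹ V_i` of the pulled-back families. -/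
def boxFamily (s : Finset ι) (V : ∀ i, Set (Set (X i))) : Set (Set (∀ i, X i)) :=
  {B | ∃ c : ∀ i ∈ s, Set (X i), (∀ i hi, c i hi ∈ V i) ∧ B = {x | ∀ i hi, x i ∈ c i hi}}

lemma exists_finset_subset_boxFamily_cover (s : Finset ι) {V : ∀ i, Set (Set (X i))}
    {K : Set (∀ i, X i)} (hK : K.Nonempty)
    (hV : ∀ i, ∃ F : Finset (Set (X i)), ↑F ⊆ V i ∧ (fun x => x i) '' K ⊆ ⋃₀ ↑F) :
    ∃ F : Finset (Set (∀ i, X i)), ↑F ⊆ boxFamily s V ∧ K ⊆ ⋃₀ ↑F ∧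
      F.card ≤ ∏ i ∈ s, coverNum (V i) ((fun x => x i) '' K) := by
  choose F hFV hKF hF using fun i => exists_card_eq_coverNum (hK.image fun x => x i) (hV i)
  let box (c : ∀ i ∈ s, Set (X i)) : Set (∀ i, X i) := {x | ∀ i hi, x i ∈ c i hi}
  refine ⟨(s.pi F).image box, ?_, fun x hx => ?_, ?_⟩
  · rw [Finset.coe_image]
    rintro _ ⟨c, hc, rfl⟩
    exact ⟨c, fun i hi => hFV i (Finset.mem_pi.1 hc i hi), rfl⟩
  · choose w hw hxw using fun i (_ : i ∈ s) => hKF i ⟨x, hx, rfl⟩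
    exact ⟨box w, Finset.mem_image_of_mem _ (Finset.mem_pi.2 hw), hxw⟩
  · calc _ ≤ (s.pi F).card := Finset.card_image_le
      _ = _ := by rw [Finset.card_pi]; exact Finset.prod_congr rfl fun i _ => hF i

lemma exists_dynRefine_superset_of_mem_boxFamily (T : ∀ i, X i → X i) {s : Finset ι}
    {V : ∀ i, Set (Set (X i))} {U : Set (Set (∀ i, X i))}
    (hVU : ∀ B ∈ boxFamily s V, ∃ u ∈ U, B ⊆ u) {n : ℕ} {B : Set (∀ i, X i)}
    (hB : B ∈ boxFamily s fun i => dynRefine (T i) (V i) n) :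
    ∃ W ∈ dynRefine (Pi.map T) U n, B ⊆ W := by
  obtain ⟨c, hc, rfl⟩ := hB
  choose f hfV hcf using hc
  choose u huU hu using fun t (ht : t < n) =>
    hVU _ ⟨fun i hi => f i hi t, fun i hi => hfV i hi t ht, rfl⟩
  refine ⟨_, iInter_preimage_mem_dynRefine _ u huU,
    fun x hx => mem_iInter₂.2 fun t ht => hu t ht fun i hi => ?_⟩
  have hxi := hx i hi
  rw [hcf] at hxi
  simpa using mem_iInter₂.1 hxi t (Finset.mem_range.2 ht)

lemma coverNum_dynRefine_pi_le_prod (T : ∀ i, X i → X i) {s : Finset ι}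
    {V : ∀ i, Finset (Set (X i))} (hV : ∀ i, ⋃₀ (V i : Set (Set (X i))) = univ)
    {U : Set (Set (∀ i, X i))} (hVU : ∀ B ∈ boxFamily s fun i => ↑(V i), ∃ u ∈ U, B ⊆ u)
    (K : Set (∀ i, X i)) (n : ℕ) :
    coverNum (dynRefine (Pi.map T) U n) K ≤
      ∏ i ∈ s, coverNum (dynRefine (T i) ↑(V i) n) ((fun x => x i) '' K) := by
  rcases K.eq_empty_or_nonempty with rfl | hK
  · simp [coverNum_empty]
  obtain ⟨F, hFB, hKF, hF⟩ := exists_finset_subset_boxFamily_cover s hK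
    fun i => exists_finset_subset_dynRefine_cover (T i) (hV i) n _
  simpa using (coverNum_image_le_card id hK
    (fun B hB => exists_dynRefine_superset_of_mem_boxFamily T hVU (hFB hB)) hKF).trans hF

variable [∀ i, TopologicalSpace (X i)]

lemma exists_isFinOpenCover_boxFamily_subset [∀ i, CompactSpace (X i)] [Nonempty (∀ i, X i)]
    {U : Finset (Set (∀ i, X i))} (hU : IsFinOpenCover U) :
    ∃ (s : Finset ι) (V : ∀ i, Finset (Set (X i))), (∀ i, IsFinOpenCover (V i)) ∧
      ∀ B ∈ boxFamily s fun i => ↑(V i), ∃ u ∈ U, B ⊆ u := by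
  have hbasic (y : ∀ i, X i) : ∃ (I : Finset ι) (O : ∀ i, Set (X i)),
      (∀ i, IsOpen (O i) ∧ y i ∈ O i) ∧ ∃ u ∈ U, (I : Set ι).pi O ⊆ u := by
    obtain ⟨u, hu, hyu⟩ := mem_sUnion.1 (hU.2.ge (mem_univ y))
    have hu_nhds := (hU.1 u hu).mem_nhds hyu
    rw [nhds_pi, Filter.mem_pi'] at hu_nhds
    obtain ⟨I, t, ht, hIt⟩ := hu_nhds
    exact ⟨I, fun i => interior (t i),
      fun i => ⟨isOpen_interior, mem_interior_iff_mem_nhds.2 (ht i)⟩,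
      u, hu, (pi_mono fun i _ => interior_subset).trans hIt⟩
  choose I O hO u hu hOu using hbasic
  obtain ⟨t, ht⟩ := CompactSpace.elim_nhds_subcover (fun y => (I y : Set ι).pi (O y))
    fun y => set_pi_mem_nhds (I y).finite_toSet fun i _ => (hO y i).1.mem_nhds (hO y i).2
  choose V hV hVO using fun i =>
    exists_isFinOpenCover_forall_subset_of_mem (fun y : t => O y i) fun y => (hO y i).1
  refine ⟨t.biUnion I, V, hV, ?_⟩
  rintro _ ⟨c, hc, rfl⟩
  choose z hz using fun i hi => hVO i _ (hc i hi)
  obtain ⟨x₀⟩ := ‹Nonempty (∀ i, X i)›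
  let w (i : ι) : X i := if hi : i ∈ t.biUnion I then z i hi else x₀ i
  obtain ⟨y, hyt, hwy⟩ := mem_iUnion₂.1 (ht.ge (mem_univ w))
  refine ⟨u y, hu y, fun x hx => hOu y fun i hiy => ?_⟩
  have hi : i ∈ t.biUnion I := Finset.mem_biUnion.2 ⟨y, hyt, hiy⟩
  have hwi : w i = z i hi := dif_pos hi
  exact hz i hi ⟨y, hyt⟩ (hwi ▸ hwy i hiy) (hx i hi)

theorem coverEntropy_piMap_le_iSup_sum [∀ i, CompactSpace (X i)] (T : ∀ i, X i → X i)
    (K : Set (∀ i, X i)) :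
    coverEntropy (Pi.map T) K ≤
      ⨆ s : Finset ι, ∑ i ∈ s, coverEntropy (T i) ((fun x => x i) '' K) := by
  rcases isEmpty_or_nonempty (∀ i, X i) with hY | hY
  · rw [K.eq_empty_of_isEmpty]
    refine iSup₂_le fun U _ => (coverEntropyOf_empty _ U).le.trans (le_iSup_of_le ∅ ?_)
    simp
  refine iSup₂_le fun U hU => ?_
  obtain ⟨s, V, hV, hVU⟩ := exists_isFinOpenCover_boxFamily_subset hU
  refine le_iSup_of_le s ((coverEntropyOf_le_sum ?_ ?_).trans
    (Finset.sum_le_sum fun i _ => coverEntropyOf_le_coverEntropy (T i) (hV i) _))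
  · exact fun i _ n => coverNum_pos (exists_finset_subset_dynRefine_cover (T i) (hV i).2 n _)
  · exact coverNum_dynRefine_pi_le_prod T (fun i => (hV i).2) hVU K

end Product

theorem product_coverEntropy_bounds_general (X : ℕ → Type*) [∀ i, MetricSpace (X i)]
    [∀ i, CompactSpace (X i)] (T : ∀ i, X i ≃ₜ X i)
    (K : Set (∀ i, X i)) (j : ℕ) :
    coverEntropy (⇑(T j)) ((fun x => x j) '' K) ≤
      coverEntropy (fun (x : ∀ i, X i) (i : ℕ) => T i (x i)) K ∧
      coverEntropy (fun (x : ∀ i, X i) (i : ℕ) => T i (x i)) K ≤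
        ⨆ N : ℕ, ∑ i ∈ Finset.range N,
          coverEntropy (⇑(T i)) ((fun x => x i) '' K) := by
  refine ⟨coverEntropy_image_le_of_semiconj (continuous_apply j) (fun _ => rfl) K, ?_⟩
  refine (coverEntropy_piMap_le_iSup_sum (fun i => T i) K).trans (iSup_le fun s => ?_)
  exact le_iSup_of_le (s.sup id).succ (Finset.sum_le_sum_of_subset_of_nonneg
    (Finset.subset_range_sup_succ s) fun i _ _ => coverEntropy_nonneg _ _)

/-- For a countable product system and a closed `K`,
`h(T_j, π_j K) ≤ h(S, K) ≤ ∑_{i ∈ ℕ} h(T_i, π_i K)` (the series of nonnegative terms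
being the supremum of its partial sums). -/
theorem product_coverEntropy_bounds (X : ℕ → Type*) [∀ i, MetricSpace (X i)]
    [∀ i, CompactSpace (X i)] (T : ∀ i, X i ≃ₜ X i)
    (K : Set (∀ i, X i)) (hK : IsClosed K) (j : ℕ) :
    coverEntropy (⇑(T j)) ((fun x => x j) '' K) ≤
      coverEntropy (fun (x : ∀ i, X i) (i : ℕ) => T i (x i)) K ∧
      coverEntropy (fun (x : ∀ i, X i) (i : ℕ) => T i (x i)) K ≤
        ⨆ N : ℕ, ∑ i ∈ Finset.range N,
          coverEntropy (⇑(T i)) ((fun x => x i) '' K) :=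
  product_coverEntropy_bounds_general X T K j

end Lowering
end
end
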